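/- Let γ₁, γ₂ ∈ ℝ and let u : ℝ → ℝ be defined by u(x) = 0 for x ∈ [−1/2, 1/2] and u(x) = −1 otherwise, regarded as a time-independent candidate solution U(t,x) := u(x) of the Allen–Cahn equation. Let μ be any measure on ℝ × ℝ that is absolutely continuous with respect to two-dimensional Lebesgue measure (volume). Then for μ-almost every point (t,x) ∈ ℝ × ℝ: the map s ↦ U(s,x) has derivative 0 at t, the map ξ ↦ u(ξ) has derivative 0 at x, its derivative function has derivative 0 at x, and the Allen–Cahn residual (∂U/∂t)(t,x) − γ₁·(∂²U/∂x²)(t,x) − γ₂·(U(t,x) − U(t,x)³) equals 0. In particular, collocation points drawn from μ yield a vanishing physics loss with probability one. -/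
import Mathlib


open MeasureTheory Real

/-- **Allen–Cahn fixed point with vanishing residual almost everywhere.**
For the piecewise-constant function `u` (zero on `[-1/2, 1/2]`, `-1` elsewhere),
regarded as a time-independent candidate solution `U (t, x) = u x` of the
Allen–Cahn equation `u_t = γ₁ u_xx + γ₂ (u - u³)`, and any measure `μ` on
`ℝ × ℝ` absolutely continuous w.r.t. the two-dimensional Lebesgue measure,
μ-almost every point `(t, x)` satisfies: the time slice has derivative `0` at `t`,
`u` has derivative `0` at `x`, `deriv u` has derivative `0` at `x`, and the
Allen–Cahn residual vanishes at `(t, x)`. -/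
theorem allen_cahn_fixed_point_residual_ae
    (γ₁ γ₂ : ℝ)
    (u : ℝ → ℝ)
    (hu : ∀ x : ℝ, u x = if x ∈ Set.Icc (-(1:ℝ)/2) (1/2) then 0 else -1)
    (U : ℝ → ℝ → ℝ)
    (hU : ∀ t x : ℝ, U t x = u x)
    (μ : Measure (ℝ × ℝ))
    (hμ : μ ≪ (volume : Measure (ℝ × ℝ))) :
    ∀ᵐ p : ℝ × ℝ ∂μ,
      HasDerivAt (fun s => U s p.2) 0 p.1 ∧
      HasDerivAt u 0 p.2 ∧
      HasDerivAt (deriv u) 0 p.2 ∧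
      deriv (fun s => U s p.2) p.1
        - γ₁ * deriv (deriv u) p.2
        - γ₂ * (U p.1 p.2 - (U p.1 p.2) ^ 3) = 0 := by
  have hvol : ∀ c : ℝ, (volume : Measure (ℝ × ℝ)) {p : ℝ × ℝ | p.2 = c} = 0 := by
    intro c
    have hset : {p : ℝ × ℝ | p.2 = c} = (Set.univ : Set ℝ) ×ˢ ({c} : Set ℝ) := by
      ext p; constructor
      · intro h; exact ⟨Set.mem_univ _, h⟩
      · exact fun h => h.2
    rw [hset, Measure.volume_eq_prod, Measure.prod_prod]
    simp
  have hμ2 : ∀ᵐ p : ℝ × ℝ ∂μ, p.2 ≠ -(1:ℝ)/2 ∧ p.2 ≠ (1:ℝ)/2 := by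
    rw [ae_iff]
    apply hμ
    apply measure_mono_null _
      (measure_union_null (hvol (-(1:ℝ)/2)) (hvol ((1:ℝ)/2)))
    intro p hp
    simp only [Set.mem_setOf_eq, not_and_or, not_not, Set.mem_union] at hp ⊢
    tauto
  filter_upwards [hμ2] with p hp
  obtain ⟨hl, hr⟩ := hp
  -- u is locally constant around p.2
  have hind : ∀ᶠ y in nhds p.2, u y = u p.2 := by
    by_cases hc : p.2 ∈ Set.Icc (-(1:ℝ)/2) (1/2)
    · have hio : p.2 ∈ Set.Ioo (-(1:ℝ)/2) (1/2) := by
        rcases hc with ⟨h1, h2⟩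
        exact ⟨lt_of_le_of_ne h1 (Ne.symm hl), lt_of_le_of_ne h2 hr⟩
      filter_upwards [isOpen_Ioo.eventually_mem hio] with y hy
      rw [hu y, hu p.2, if_pos (Set.Ioo_subset_Icc_self hy), if_pos hc]
    · have hopen : IsOpen (Set.Icc (-(1:ℝ)/2) (1/2))ᶜ := isClosed_Icc.isOpen_compl
      filter_upwards [hopen.eventually_mem hc] with y hy
      rw [hu y, hu p.2, if_neg hy, if_neg hc]
  have hdu : HasDerivAt u 0 p.2 :=
    (hasDerivAt_const p.2 (u p.2)).congr_of_eventuallyEq hind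
  have hderiv0 : ∀ᶠ y in nhds p.2, deriv u y = 0 := by
    filter_upwards [hind.eventually_nhds] with y hy
    exact ((hasDerivAt_const y (u p.2)).congr_of_eventuallyEq hy).deriv
  have hddu : HasDerivAt (deriv u) 0 p.2 :=
    (hasDerivAt_const p.2 (0:ℝ)).congr_of_eventuallyEq hderiv0
  have htime : HasDerivAt (fun s => U s p.2) 0 p.1 := by
    have : (fun s => U s p.2) = fun _ => u p.2 := funext fun s => hU s p.2
    rw [this]; exact hasDerivAt_const _ _
  refine ⟨htime, hdu, hddu, ?_⟩
  rw [htime.deriv, hddu.deriv, hU p.1 p.2]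
  have hval : u p.2 - (u p.2) ^ 3 = 0 := by
    rw [hu p.2]; split <;> norm_num
  rw [hval]; ring
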